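/- If X₁,...,X_m are i.i.d. with distribution p on Fin k and q is any type with denominator m, then P(empirical distribution of (X₁,...,X_m) = q) = |T_q| · exp(−m(H(q)+KL(q‖p))), and combining with |T_q| ≥ (m+1)^{−k} e^{mH(q)} yields P(empirical distribution = q) ≥ (m+1)^{−k} e^{−m·KL(q‖p)} whenever supp(q) ⊆ supp(p). -/
import Mathlib


open Finset
open scoped Classical Nat


private lemma count_cons {m k : ℕ} (a : Fin k) (w : Fin m → Fin k) (i : Fin k) :
    (Finset.univ.filter (fun j => (Fin.cons a w : Fin (m+1) → Fin k) j = i)).card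
      = (if a = i then 1 else 0) + (Finset.univ.filter (fun j => w j = i)).card := by
  rw [Finset.card_filter, Finset.card_filter, Fin.sum_univ_succ]
  simp

private lemma count_sum {m k : ℕ} (z : Fin m → Fin k) :
    ∑ i, (Finset.univ.filter (fun j => z j = i)).card = m := by
  rw [← Finset.card_eq_sum_card_fiberwise (f := z) (fun j _ => Finset.mem_univ (z j))]
  simp

private lemma fact_le_fact_mul_pow {a d : ℕ} : (a + d)! ≤ a ! * (a + d) ^ d := by
  induction d with
  | zero => simp
  | succ d ih =>
      have h1 : (a + (d+1))! = (a + d + 1) * (a + d)! := by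
        rw [show a + (d+1) = (a+d) + 1 by ring, Nat.factorial_succ]
      have h2 : (a + d) ^ d ≤ (a + d + 1) ^ d := Nat.pow_le_pow_left (by omega) d
      calc (a + (d+1))! = (a + d + 1) * (a + d)! := h1
        _ ≤ (a + d + 1) * (a ! * (a + d) ^ d) := Nat.mul_le_mul_left _ ih
        _ ≤ (a + d + 1) * (a ! * (a + d + 1) ^ d) :=
            Nat.mul_le_mul_left _ (Nat.mul_le_mul_left _ h2)
        _ = a ! * (a + (d+1)) ^ (d+1) := by ring_nf
  
private lemma fact_mul_pow_le {b d : ℕ} : b ! * b ^ d ≤ (b + d)! := by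
  induction d with
  | zero => simp
  | succ d ih =>
      calc b ! * b ^ (d+1) = (b ! * b ^ d) * b := by ring
        _ ≤ (b + d)! * b := Nat.mul_le_mul_right _ ih
        _ ≤ (b + d)! * (b + d + 1) := Nat.mul_le_mul_left _ (by omega)
        _ = (b + (d+1))! := by rw [show b + (d+1) = (b+d)+1 by ring, Nat.factorial_succ]; ring

/-- `b! * b^a ≤ a! * b^b`. -/
private lemma fact_pow_le (a b : ℕ) : b ! * b ^ a ≤ a ! * b ^ b := by
  rcases le_total a b with h | h
  · obtain ⟨d, rfl⟩ : ∃ d, b = a + d := ⟨b - a, by omega⟩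
    calc (a+d)! * (a+d) ^ a ≤ (a ! * (a+d) ^ d) * (a+d) ^ a :=
          Nat.mul_le_mul_right _ fact_le_fact_mul_pow
      _ = a ! * (a+d) ^ (a+d) := by rw [mul_assoc, ← pow_add]; ring_nf
  · obtain ⟨d, rfl⟩ : ∃ d, a = b + d := ⟨a - b, by omega⟩
    calc b ! * b ^ (b+d) = (b ! * b ^ d) * b ^ b := by rw [mul_assoc, ← pow_add]; ring_nf
      _ ≤ (b+d)! * b ^ b := Nat.mul_le_mul_right _ fact_mul_pow_le
private lemma sum_update_split {k : ℕ} (n : Fin k → ℕ) (a : Fin k) (b : ℕ) :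
    ∑ i, Function.update n a b i = b + ∑ i ∈ Finset.univ.erase a, n i := by
  rw [Finset.sum_update_of_mem (Finset.mem_univ a), Finset.sdiff_singleton_eq_erase]

private lemma multinomial_rec {k m : ℕ} (n : Fin k → ℕ) (hn : ∑ i, n i = m + 1) :
    ∑ a, (if n a = 0 then 0 else Nat.multinomial Finset.univ (Function.update n a (n a - 1)))
      = Nat.multinomial Finset.univ n := by
  have hP : 0 < ∏ i, (n i)! := Finset.prod_pos fun i _ => Nat.factorial_pos _
  apply Nat.eq_of_mul_eq_mul_left hP
  rw [Finset.mul_sum]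
  have key : ∀ a, (∏ i, (n i)!) *
      (if n a = 0 then 0 else Nat.multinomial Finset.univ (Function.update n a (n a - 1)))
      = n a * m ! := by
    intro a
    by_cases ha : n a = 0
    · simp [ha]
    · rw [if_neg ha]
      have hsplit := Finset.add_sum_erase Finset.univ n (Finset.mem_univ a)
      have hsum' : ∑ i, Function.update n a (n a - 1) i = m := by
        rw [sum_update_split]; omega
      have hprod : (∏ i, (n i)!) = n a * ∏ i, (Function.update n a (n a - 1) i)! := by
        rw [← Finset.mul_prod_erase Finset.univ _ (Finset.mem_univ a),
            ← Finset.mul_prod_erase Finset.univ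
              (fun i => (Function.update n a (n a - 1) i)!) (Finset.mem_univ a)]
        rw [Function.update_self, ← mul_assoc]
        congr 1
        · have h1 : n a = (n a - 1) + 1 := by omega
          rw [h1, Nat.factorial_succ]; congr 2 <;> omega
        · apply Finset.prod_congr rfl
          intro i hi
          rw [Function.update_of_ne (Finset.mem_erase.1 hi).1]
      rw [hprod, mul_assoc]
      congr 1
      rw [Nat.multinomial_spec, hsum']
  rw [Finset.sum_congr rfl (fun a _ => key a), ← Finset.sum_mul, hn,
      Nat.multinomial_spec, hn, Nat.factorial_succ]

private lemma card_type_class {k : ℕ} : ∀ (m : ℕ) (n : Fin k → ℕ), ∑ i, n i = m →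
    (Finset.univ.filter (fun z : Fin m → Fin k =>
        ∀ i, (Finset.univ.filter (fun j => z j = i)).card = n i)).card
      = Nat.multinomial Finset.univ n := by
  intro m
  induction m with
  | zero =>
      intro n hn
      have hn0 : ∀ i, n i = 0 := fun i => Finset.sum_eq_zero_iff.1 hn i (Finset.mem_univ i)
      have h1 : (Finset.univ.filter (fun z : Fin 0 → Fin k =>
          ∀ i, (Finset.univ.filter (fun j => z j = i)).card = n i)) = Finset.univ := by
        apply Finset.filter_true_of_mem
        intro z _ i
        simp [hn0 i]
      have h2 : Nat.multinomial Finset.univ n = 1 := by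
        have hs := Nat.multinomial_spec Finset.univ n
        simp only [hn0] at hs
        simpa using hs
      rw [h1, h2]
      simp
  | succ m ih =>
      intro n hn
      rw [Finset.card_eq_sum_card_fiberwise (f := fun z : Fin (m+1) → Fin k => z 0)
        (t := Finset.univ) (fun z _ => Finset.mem_univ _)]
      rw [← multinomial_rec n hn]
      apply Finset.sum_congr rfl
      intro a _
      rw [Finset.filter_filter]
      by_cases ha : n a = 0
      · rw [if_pos ha]
        rw [Finset.card_eq_zero, Finset.filter_eq_empty_iff]
        rintro z - ⟨hz, hz0⟩
        have h3 := hz a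
        rw [ha, Finset.card_eq_zero, Finset.filter_eq_empty_iff] at h3
        exact h3 (Finset.mem_univ (0 : Fin (m+1))) hz0
      · rw [if_neg ha]
        have hsplit := Finset.add_sum_erase Finset.univ n (Finset.mem_univ a)
        rw [← ih (Function.update n a (n a - 1)) (by rw [sum_update_split]; omega)]
        refine Finset.card_bij' (fun z _ => Fin.tail z) (fun w _ => Fin.cons a w) ?hi ?hj ?li ?ri
        case hi =>
          intro z hz
          simp only [Finset.mem_filter] at hz ⊢
          obtain ⟨-, hz, hz0⟩ := hz
          refine ⟨Finset.mem_univ _, fun i => ?_⟩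
          have hc := count_cons a (Fin.tail z) i
          have hzz : (Fin.cons a (Fin.tail z) : Fin (m+1) → Fin k) = z := by
            rw [← hz0]; exact Fin.cons_self_tail z
          rw [hzz, hz i] at hc
          rcases eq_or_ne i a with rfl | hia
          · rw [Function.update_self]
            rw [if_pos rfl] at hc
            omega
          · rw [Function.update_of_ne hia]
            rw [if_neg (Ne.symm hia)] at hc
            omega
        case hj =>
          intro w hw
          simp only [Finset.mem_filter] at hw ⊢
          obtain ⟨-, hw⟩ := hw
          refine ⟨Finset.mem_univ _, fun i => ?_, by simp⟩
          rw [count_cons a w i, hw i]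
          rcases eq_or_ne i a with rfl | hia
          · rw [Function.update_self, if_pos rfl]; omega
          · rw [Function.update_of_ne hia, if_neg (Ne.symm hia)]
            omega
        case li =>
          intro z hz
          simp only [Finset.mem_filter] at hz
          funext j
          rcases Fin.eq_zero_or_eq_succ j with rfl | ⟨j', rfl⟩
          · simpa using hz.2.2.symm
          · simp [Fin.tail]
        case ri =>
          intro w _
          funext j
          simp [Fin.tail]
private lemma max_type {k m : ℕ} (n c : Fin k → ℕ) (hn : ∑ i, n i = m) (hc : ∑ i, c i = m) :
    Nat.multinomial Finset.univ c * ∏ i, n i ^ c i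
      ≤ Nat.multinomial Finset.univ n * ∏ i, n i ^ n i := by
  have hK : 0 < (∏ i, (c i)!) * ∏ i, (n i)! :=
    Nat.mul_pos (Finset.prod_pos fun i _ => Nat.factorial_pos _)
      (Finset.prod_pos fun i _ => Nat.factorial_pos _)
  apply Nat.le_of_mul_le_mul_left _ hK
  calc ((∏ i, (c i)!) * ∏ i, (n i)!) * (Nat.multinomial Finset.univ c * ∏ i, n i ^ c i)
      = ((∏ i, (c i)!) * Nat.multinomial Finset.univ c) * ∏ i, ((n i)! * n i ^ c i) := by
        rw [Finset.prod_mul_distrib]; ring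
    _ = m ! * ∏ i, ((n i)! * n i ^ c i) := by rw [Nat.multinomial_spec, hc]
    _ ≤ m ! * ∏ i, ((c i)! * n i ^ n i) :=
        Nat.mul_le_mul_left _ (Finset.prod_le_prod' fun i _ => fact_pow_le (c i) (n i))
    _ = ((∏ i, (c i)!) * ∏ i, (n i)!) * (Nat.multinomial Finset.univ n * ∏ i, n i ^ n i) := by
        rw [← hn, ← Nat.multinomial_spec Finset.univ n, Finset.prod_mul_distrib]; ring

private lemma prod_on_class {k m : ℕ} (f : Fin k → ℝ) (c : Fin k → ℕ) (z : Fin m → Fin k)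
    (hz : ∀ i, (Finset.univ.filter (fun j => z j = i)).card = c i) :
    ∏ j, f (z j) = ∏ i, f i ^ c i := by
  rw [← Finset.prod_fiberwise_of_maps_to (g := z) (t := Finset.univ)
    (fun j _ => Finset.mem_univ _) (fun j => f (z j))]
  apply Finset.prod_congr rfl
  intro i _
  calc ∏ j ∈ Finset.univ.filter (fun j => z j = i), f (z j)
      = ∏ j ∈ Finset.univ.filter (fun j => z j = i), f i :=
        Finset.prod_congr rfl (fun j hj => by rw [(Finset.mem_filter.1 hj).2])
    _ = f i ^ c i := by rw [Finset.prod_const, hz i]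

private lemma exp_eq {k m : ℕ} (hm : 0 < m) (p q : Fin k → ℝ) (hp : ∀ i, 0 ≤ p i)
    (hsupp : ∀ i, q i ≠ 0 → p i ≠ 0) (n : Fin k → ℕ)
    (hn : ∀ i, (m : ℝ) * q i = n i) :
    Real.exp (-(m : ℝ) *
        ((-∑ i, q i * Real.log (q i)) + ∑ i, q i * Real.log (q i / p i)))
      = ∏ i, p i ^ n i := by
  have hzero : ∀ i, q i = 0 → n i = 0 := by
    intro i h
    have := hn i
    rw [h, mul_zero] at this
    exact_mod_cast this.symm
  have harg : -(m : ℝ) * ((-∑ i, q i * Real.log (q i)) + ∑ i, q i * Real.log (q i / p i))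
      = ∑ i, (n i : ℝ) * Real.log (p i) := by
    rw [neg_mul, mul_add, mul_neg, neg_add, neg_neg, ← neg_mul, Finset.mul_sum,
      Finset.mul_sum, ← Finset.sum_add_distrib]
    apply Finset.sum_congr rfl
    intro i _
    by_cases hqi : q i = 0
    · simp [hqi, hzero i hqi]
    · rw [Real.log_div hqi (hsupp i hqi), ← hn i]
      ring
  rw [harg, Real.exp_sum]
  apply Finset.prod_congr rfl
  intro i _
  by_cases hqi : q i = 0
  · simp [hzero i hqi]
  · have hpi : 0 < p i := lt_of_le_of_ne (hp i) (Ne.symm (hsupp i hqi))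
    rw [Real.exp_nat_mul, Real.exp_log hpi]

/-- Probability of a type class: `P(emp = q) = |T_q| · exp(-m(H(q)+KL(q‖p)))`, and
combining with `|T_q| ≥ (m+1)^(-k) e^{mH(q)}` gives
`P(emp = q) ≥ (m+1)^(-k) e^{-m·KL(q‖p)}` when `supp q ⊆ supp p`. -/
theorem type_class_probability (k m : ℕ) (hm : 0 < m)
    (p q : Fin k → ℝ)
    (hp : ∀ i, 0 ≤ p i) (hpsum : ∑ i, p i = 1)
    (hq : ∀ i, 0 ≤ q i) (hqsum : ∑ i, q i = 1)
    (htype : ∀ i, ∃ c : ℕ, (m : ℝ) * q i = c)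
    (hsupp : ∀ i, q i ≠ 0 → p i ≠ 0) :
    (∑ z ∈ Finset.univ.filter
          (fun z : Fin m → Fin k =>
            ∀ i, ((Finset.univ.filter (fun j => z j = i)).card : ℝ) / m = q i),
        ∏ j, p (z j))
      = ((Finset.univ.filter
          (fun z : Fin m → Fin k =>
            ∀ i, ((Finset.univ.filter (fun j => z j = i)).card : ℝ) / m = q i)).card : ℝ) *
        Real.exp (-(m : ℝ) *
          ((-∑ i, q i * Real.log (q i)) + ∑ i, q i * Real.log (q i / p i))) ∧
    ((m + 1 : ℝ) ^ k)⁻¹ * Real.exp (-(m : ℝ) * ∑ i, q i * Real.log (q i / p i)) ≤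
      ∑ z ∈ Finset.univ.filter
          (fun z : Fin m → Fin k =>
            ∀ i, ((Finset.univ.filter (fun j => z j = i)).card : ℝ) / m = q i),
        ∏ j, p (z j) := by
  have hmR : (m : ℝ) ≠ 0 := Nat.cast_ne_zero.2 hm.ne'
  choose n hn using htype
  have hTset : (Finset.univ.filter (fun z : Fin m → Fin k =>
      ∀ i, ((Finset.univ.filter (fun j => z j = i)).card : ℝ) / m = q i))
      = Finset.univ.filter (fun z : Fin m → Fin k =>
        ∀ i, (Finset.univ.filter (fun j => z j = i)).card = n i) := by
    apply Finset.filter_congr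
    intro z _
    constructor
    · intro h i
      have h1 := h i
      rw [div_eq_iff hmR] at h1
      have h2 : ((Finset.univ.filter (fun j => z j = i)).card : ℝ) = n i := by
        rw [h1, mul_comm]; exact hn i
      exact_mod_cast h2
    · intro h i
      rw [h i, ← hn i, mul_comm, mul_div_assoc, div_self hmR, mul_one]
  rw [hTset]
  have hsumn : ∑ i, n i = m := by
    have h1 : ((∑ i, n i : ℕ) : ℝ) = (m : ℝ) := by
      push_cast
      calc ∑ i, (n i : ℝ) = ∑ i, (m : ℝ) * q i := Finset.sum_congr rfl (fun i _ => (hn i).symm)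
        _ = (m : ℝ) * ∑ i, q i := by rw [Finset.mul_sum]
        _ = m := by rw [hqsum, mul_one]
    exact_mod_cast h1
  have hcard := card_type_class (k := k) m n hsumn
  have hE := exp_eq hm p q hp hsupp n hn
  have hsum1 : (∑ z ∈ Finset.univ.filter (fun z : Fin m → Fin k =>
        ∀ i, (Finset.univ.filter (fun j => z j = i)).card = n i), ∏ j, p (z j))
      = ((Finset.univ.filter (fun z : Fin m → Fin k =>
        ∀ i, (Finset.univ.filter (fun j => z j = i)).card = n i)).card : ℝ) * ∏ i, p i ^ n i := by
    rw [Finset.sum_congr rfl (fun z hz => prod_on_class p n z (Finset.mem_filter.1 hz).2),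
      Finset.sum_const, nsmul_eq_mul]
  refine ⟨by rw [hsum1, hE], ?_⟩
  -- lower bound part
  have hqn : ∀ i, q i = (n i : ℝ) / m := fun i => by
    rw [← hn i, mul_comm, mul_div_assoc, div_self hmR, mul_one]
  have hq_prod : ∀ c : Fin k → ℕ, (∏ i, q i ^ c i)
      = ((∏ i, n i ^ c i : ℕ) : ℝ) / (m : ℝ) ^ (∑ i, c i) := by
    intro c
    push_cast
    rw [← Finset.prod_pow_eq_pow_sum, ← Finset.prod_div_distrib]
    exact Finset.prod_congr rfl fun i _ => by rw [hqn i, div_pow]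
  have hq_nonneg_prod : (0:ℝ) ≤ ∏ i, q i ^ n i :=
    Finset.prod_nonneg fun i _ => pow_nonneg (hq i) _
  have hSle : ∀ c : Fin k → ℕ,
      (∑ z ∈ Finset.univ.filter (fun z : Fin m → Fin k =>
        ∀ i, (Finset.univ.filter (fun j => z j = i)).card = c i), ∏ j, q (z j))
      ≤ (Nat.multinomial Finset.univ n : ℝ) * ∏ i, q i ^ n i := by
    intro c
    by_cases hc : ∑ i, c i = m
    · rw [Finset.sum_congr rfl (fun z hz => prod_on_class q c z (Finset.mem_filter.1 hz).2),
        Finset.sum_const, nsmul_eq_mul, card_type_class m c hc]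
      rw [hq_prod c, hq_prod n, hc, hsumn, ← mul_div_assoc, ← mul_div_assoc]
      rw [div_le_div_iff_of_pos_right (by positivity : (0:ℝ) < (m:ℝ) ^ m)]
      exact_mod_cast max_type n c hsumn hc
    · have hempty : Finset.univ.filter (fun z : Fin m → Fin k =>
          ∀ i, (Finset.univ.filter (fun j => z j = i)).card = c i) = ∅ := by
        rw [Finset.filter_eq_empty_iff]
        intro z _ hz
        apply hc
        rw [← count_sum z]
        exact Finset.sum_congr rfl fun i _ => (hz i).symm
      rw [hempty, Finset.sum_empty]
      exact mul_nonneg (Nat.cast_nonneg _) hq_nonneg_prod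
  have htot : ∑ c ∈ Fintype.piFinset (fun _ : Fin k => Finset.range (m+1)),
      (∑ z ∈ Finset.univ.filter (fun z : Fin m → Fin k =>
        ∀ i, (Finset.univ.filter (fun j => z j = i)).card = c i), ∏ j, q (z j)) = 1 := by
    have hmap : ∀ z : Fin m → Fin k,
        (fun i => (Finset.univ.filter (fun j => z j = i)).card)
          ∈ Fintype.piFinset (fun _ : Fin k => Finset.range (m+1)) := by
      intro z
      rw [Fintype.mem_piFinset]
      intro i
      rw [Finset.mem_range]
      have h1 : (Finset.univ.filter (fun j => z j = i)).card
          ≤ (Finset.univ : Finset (Fin m)).card := Finset.card_filter_le _ _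
      simp only [Finset.card_univ, Fintype.card_fin] at h1
      exact Nat.lt_succ_of_le h1
    have hfe : ∀ c : Fin k → ℕ, Finset.univ.filter (fun z : Fin m → Fin k =>
          ∀ i, (Finset.univ.filter (fun j => z j = i)).card = c i)
        = Finset.univ.filter (fun z : Fin m → Fin k =>
          (fun i => (Finset.univ.filter (fun j => z j = i)).card) = c) := by
      intro c
      apply Finset.filter_congr
      intro z _
      exact (funext_iff).symm
    have h1 := Finset.sum_fiberwise_of_maps_to (s := (Finset.univ : Finset (Fin m → Fin k)))
      (g := fun z : Fin m → Fin k => fun i => (Finset.univ.filter (fun j => z j = i)).card)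
      (fun z _ => hmap z) (fun z => ∏ j, q (z j))
    calc ∑ c ∈ Fintype.piFinset (fun _ : Fin k => Finset.range (m+1)),
        (∑ z ∈ Finset.univ.filter (fun z : Fin m → Fin k =>
          ∀ i, (Finset.univ.filter (fun j => z j = i)).card = c i), ∏ j, q (z j))
        = ∑ c ∈ Fintype.piFinset (fun _ : Fin k => Finset.range (m+1)),
          (∑ z ∈ Finset.univ.filter (fun z : Fin m → Fin k =>
            (fun i => (Finset.univ.filter (fun j => z j = i)).card) = c), ∏ j, q (z j)) :=
          Finset.sum_congr rfl fun c _ => by rw [hfe c]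
      _ = ∑ z : Fin m → Fin k, ∏ j, q (z j) := h1
      _ = (∑ i, q i) ^ m := (Fintype.sum_pow q m).symm
      _ = 1 := by rw [hqsum, one_pow]
  have hBcard : (Fintype.piFinset (fun _ : Fin k => Finset.range (m+1))).card = (m+1)^k := by
    rw [Fintype.card_piFinset]
    simp
  have hmain : (1:ℝ) ≤ ((m:ℝ)+1)^k * ((Nat.multinomial Finset.univ n : ℝ) * ∏ i, q i ^ n i) := by
    calc (1:ℝ) = _ := htot.symm
      _ ≤ ∑ _c ∈ Fintype.piFinset (fun _ : Fin k => Finset.range (m+1)),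
          ((Nat.multinomial Finset.univ n : ℝ) * ∏ i, q i ^ n i) :=
          Finset.sum_le_sum fun c _ => hSle c
      _ = ((Fintype.piFinset (fun _ : Fin k => Finset.range (m+1))).card : ℝ) *
          ((Nat.multinomial Finset.univ n : ℝ) * ∏ i, q i ^ n i) := by
          rw [Finset.sum_const, nsmul_eq_mul]
      _ = ((m:ℝ)+1)^k * ((Nat.multinomial Finset.univ n : ℝ) * ∏ i, q i ^ n i) := by
          rw [hBcard]; push_cast; ring
  have hEq : (∏ i, q i ^ n i) = Real.exp ((m:ℝ) * ∑ i, q i * Real.log (q i)) := by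
    have h2 := exp_eq hm q q hq (fun _ h => h) n hn
    have h0 : ∑ i, q i * Real.log (q i / q i) = 0 := Finset.sum_eq_zero fun i _ => by
      by_cases h : q i = 0
      · simp [h]
      · rw [div_self h, Real.log_one, mul_zero]
    rw [← h2, h0, add_zero, neg_mul_neg]
  have hsplit2 : ∏ i, p i ^ n i = (∏ i, q i ^ n i) *
      Real.exp (-(m:ℝ) * ∑ i, q i * Real.log (q i / p i)) := by
    rw [hEq, ← Real.exp_add, ← hE]
    congr 1
    ring
  rw [hsum1, hcard]
  have hpos : (0:ℝ) < ((m:ℝ)+1)^k := by positivity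
  have hX : (((m:ℝ)+1)^k)⁻¹ ≤ (Nat.multinomial Finset.univ n : ℝ) * ∏ i, q i ^ n i := by
    calc (((m:ℝ)+1)^k)⁻¹ = (((m:ℝ)+1)^k)⁻¹ * 1 := (mul_one _).symm
      _ ≤ (((m:ℝ)+1)^k)⁻¹ * (((m:ℝ)+1)^k *
          ((Nat.multinomial Finset.univ n : ℝ) * ∏ i, q i ^ n i)) :=
          mul_le_mul_of_nonneg_left hmain (by positivity)
      _ = (Nat.multinomial Finset.univ n : ℝ) * ∏ i, q i ^ n i := by
          rw [← mul_assoc, inv_mul_cancel₀ hpos.ne', one_mul]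
  calc (((m:ℝ)+1)^k)⁻¹ * Real.exp (-(m:ℝ) * ∑ i, q i * Real.log (q i / p i))
      ≤ ((Nat.multinomial Finset.univ n : ℝ) * ∏ i, q i ^ n i) *
        Real.exp (-(m:ℝ) * ∑ i, q i * Real.log (q i / p i)) :=
        mul_le_mul_of_nonneg_right hX (Real.exp_nonneg _)
    _ = (Nat.multinomial Finset.univ n : ℝ) * ∏ i, p i ^ n i := by rw [hsplit2]; ring
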